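/- arXiv:1211.4213 — 2 statements merged into one kernel-verified Lean document; each statement's English description precedes it below -/
import Mathlib

section
/- Suppose there exists a vector v ∈ ℂ^N with H_ii v ≠ 0 and H_ji v = 0 for all j ≠ i. If the feasible tuple (Q_1, …, Q_K) is Pareto-optimal, then transmitter i uses full power: tr(Q_i) = P_i. (Theorem 1, full-power condition; in the paper the existence of such v holds almost surely when N ≥ Σ_i M_i.) -/
/-!
If `tr Q i < P i`, spend the remaining power on a rank-one term `u uᴴ` with `u` a multiple of `v`.
Because `H j i u = 0`, no other receiver sees the new term, so their rates are unchanged, while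
receiver `i` gains `(H i i u)(H i i u)ᴴ` in its signal; by the matrix determinant lemma this
multiplies `det (A + S)` (with `A` the noise-plus-interference and `S` the signal covariance)
by `1 + (H i i u)ᴴ (A + S)⁻¹ (H i i u) > 1`, a strict Pareto improvement.
-/

open Matrix
open scoped ComplexOrder

/-- The achievable rate of user `i` in the `K`-pair Gaussian `(N, M 1, …, M K)` MIMO
interference channel with transmit covariance matrices `Q` and channel matrices `H`,
where interference is treated as noise:
`R_i = log det (I + (I + ∑_{j ≠ i} H i j Q j (H i j)ᴴ)⁻¹ H i i Q i (H i i)ᴴ)`. -/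
noncomputable def rate {K N : ℕ} {M : Fin K → ℕ}
    (H : ∀ i j : Fin K, Matrix (Fin (M i)) (Fin N) ℂ)
    (Q : Fin K → Matrix (Fin N) (Fin N) ℂ) (i : Fin K) : ℝ :=
  Real.log ((1 + (1 + ∑ j ∈ Finset.univ.erase i, H i j * Q j * (H i j)ᴴ)⁻¹ *
    (H i i * Q i * (H i i)ᴴ)).det.re)

/-- Feasibility: each `Q j` is positive semidefinite with `tr (Q j) ≤ P j`. -/
def Feasible {K N : ℕ} (P : Fin K → ℝ) (Q : Fin K → Matrix (Fin N) (Fin N) ℂ) : Prop :=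
  ∀ j, (Q j).PosSemidef ∧ (Q j).trace.re ≤ P j

/-- Pareto optimality: `Q` is feasible and no feasible `Q'` weakly improves every user's
rate while strictly improving at least one user's rate. -/
def ParetoOptimal {K N : ℕ} {M : Fin K → ℕ}
    (H : ∀ i j : Fin K, Matrix (Fin (M i)) (Fin N) ℂ)
    (P : Fin K → ℝ) (Q : Fin K → Matrix (Fin N) (Fin N) ℂ) : Prop :=
  Feasible P Q ∧
    ¬ ∃ Q' : Fin K → Matrix (Fin N) (Fin N) ℂ, Feasible P Q' ∧
      (∀ j, rate H Q j ≤ rate H Q' j) ∧ (∃ j, rate H Q j < rate H Q' j)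

section RankOne

variable {n : Type*} [Fintype n]

theorem mul_vecMulVec_star_mul_conjTranspose {m : Type*} [Fintype m] (A : Matrix m n ℂ)
    (u : n → ℂ) : A * vecMulVec u (star u) * Aᴴ = vecMulVec (A *ᵥ u) (star (A *ᵥ u)) := by
  rw [mul_vecMulVec, vecMulVec_mul, star_mulVec]

theorem exists_smul_dotProduct_star_eq {v : n → ℂ} (hv : v ≠ 0) {t : ℝ} (ht : 0 < t) :
    ∃ c : ℂ, c ≠ 0 ∧ (c • v) ⬝ᵥ star (c • v) = t := by
  obtain ⟨s, hs, hvs⟩ : ∃ s : ℝ, 0 < s ∧ v ⬝ᵥ star v = s := by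
    have hpos : 0 < v ⬝ᵥ star v := dotProduct_self_star_pos_iff.mpr hv
    exact ⟨_, (Complex.lt_def.mp hpos).1, Complex.eq_re_of_ofReal_le hpos.le⟩
  refine ⟨(√(t / s) : ℝ), by simp [ht.ne', hs.ne', ht.le, hs.le], ?_⟩
  rw [star_smul, smul_dotProduct, dotProduct_smul, hvs]
  simp only [smul_eq_mul, Complex.star_def, Complex.conj_ofReal]
  rw [← mul_assoc, ← Complex.ofReal_mul, Real.mul_self_sqrt (by positivity), ← Complex.ofReal_mul,
    div_mul_cancel₀ _ hs.ne']

theorem Matrix.PosSemidef.trace_eq_ofReal_re {A : Matrix n n ℂ} (hA : A.PosSemidef) :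
    A.trace = (A.trace.re : ℂ) :=
  Complex.eq_re_of_ofReal_le (r := 0) (by simpa using hA.trace_nonneg)

variable [DecidableEq n]

theorem Matrix.PosSemidef.det_eq_ofReal_re {A : Matrix n n ℂ} (hA : A.PosSemidef) :
    A.det = (A.det.re : ℂ) :=
  Complex.eq_re_of_ofReal_le (r := 0) (by simpa using hA.det_nonneg)

theorem Matrix.PosDef.det_re_pos {A : Matrix n n ℂ} (hA : A.PosDef) : 0 < A.det.re := by
  simpa using (Complex.lt_def.mp hA.det_pos).1

theorem Matrix.PosDef.det_one_add_inv_mul_re {A : Matrix n n ℂ} (hA : A.PosDef)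
    (X : Matrix n n ℂ) : (1 + A⁻¹ * X).det.re = (A + X).det.re / A.det.re := by
  rw [← Matrix.nonsing_inv_mul A hA.det_pos.ne'.isUnit, ← Matrix.mul_add, det_mul,
    det_nonsing_inv, Ring.inverse_eq_inv, hA.posSemidef.det_eq_ofReal_re, ← Complex.ofReal_inv,
    Complex.re_ofReal_mul, Complex.ofReal_re, inv_mul_eq_div]

theorem Matrix.PosDef.det_add_vecMulVec_star {B : Matrix n n ℂ} (hB : B.PosDef) (w : n → ℂ) :
    (B + vecMulVec w (star w)).det = B.det * (1 + star w ⬝ᵥ B⁻¹ *ᵥ w) := by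
  rw [vecMulVec_eq Unit, det_add_replicateCol_mul_replicateRow hB.det_pos.ne'.isUnit,
    det_unique (n := Unit), Matrix.mul_assoc, ← replicateCol_mulVec]
  simp [dotProduct_mulVec]

theorem Matrix.PosDef.det_re_lt_det_add_vecMulVec_star {B : Matrix n n ℂ} (hB : B.PosDef)
    {w : n → ℂ} (hw : w ≠ 0) : B.det.re < (B + vecMulVec w (star w)).det.re := by
  have hq : 0 < star w ⬝ᵥ B⁻¹ *ᵥ w := hB.inv.dotProduct_mulVec_pos hw
  have hlt : B.det < (B + vecMulVec w (star w)).det := by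
    rw [hB.det_add_vecMulVec_star]
    exact lt_mul_of_one_lt_right hB.det_pos (lt_add_of_pos_right 1 hq)
  exact (Complex.lt_def.mp hlt).1

end RankOne

section Channel

variable {K N : ℕ} {M : Fin K → ℕ} (H : ∀ i j : Fin K, Matrix (Fin (M i)) (Fin N) ℂ)

def interferencePlusNoise (Q : Fin K → Matrix (Fin N) (Fin N) ℂ) (i : Fin K) :
    Matrix (Fin (M i)) (Fin (M i)) ℂ :=
  1 + ∑ j ∈ Finset.univ.erase i, H i j * Q j * (H i j)ᴴ

theorem rate_eq_log_det (Q : Fin K → Matrix (Fin N) (Fin N) ℂ) (i : Fin K) :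
    rate H Q i =
      Real.log ((1 + (interferencePlusNoise H Q i)⁻¹ * (H i i * Q i * (H i i)ᴴ)).det.re) :=
  rfl

theorem posDef_interferencePlusNoise {Q : Fin K → Matrix (Fin N) (Fin N) ℂ}
    (hQ : ∀ j, (Q j).PosSemidef) (i : Fin K) : (interferencePlusNoise H Q i).PosDef :=
  PosDef.one.add_posSemidef <| Finset.sum_induction _ PosSemidef (fun _ _ ↦ PosSemidef.add)
    PosSemidef.zero fun j _ => (hQ j).mul_mul_conjTranspose_same (H i j)

theorem interferencePlusNoise_update_self (Q : Fin K → Matrix (Fin N) (Fin N) ℂ) (i : Fin K)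
    (X : Matrix (Fin N) (Fin N) ℂ) :
    interferencePlusNoise H (Function.update Q i X) i = interferencePlusNoise H Q i := by
  unfold interferencePlusNoise
  congr 1
  exact Finset.sum_congr rfl fun j hj => by rw [Function.update_of_ne (Finset.ne_of_mem_erase hj)]

theorem interferencePlusNoise_update_add_vecMulVec_of_ne (Q : Fin K → Matrix (Fin N) (Fin N) ℂ)
    {i j : Fin K} (u : Fin N → ℂ) (hu : H j i *ᵥ u = 0) :
    interferencePlusNoise H (Function.update Q i (Q i + vecMulVec u (star u))) j =
      interferencePlusNoise H Q j := by
  unfold interferencePlusNoise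
  congr 1
  refine Finset.sum_congr rfl fun l _ => ?_
  rcases eq_or_ne l i with rfl | hl
  · rw [Function.update_self, Matrix.mul_add, Matrix.add_mul,
      mul_vecMulVec_star_mul_conjTranspose, hu, zero_vecMulVec, add_zero]
  · rw [Function.update_of_ne hl]

theorem rate_update_add_vecMulVec_of_ne (Q : Fin K → Matrix (Fin N) (Fin N) ℂ)
    {i j : Fin K} (hji : j ≠ i) (u : Fin N → ℂ) (hu : H j i *ᵥ u = 0) :
    rate H (Function.update Q i (Q i + vecMulVec u (star u))) j = rate H Q j := by
  rw [rate_eq_log_det, rate_eq_log_det,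
    interferencePlusNoise_update_add_vecMulVec_of_ne H Q u hu, Function.update_of_ne hji]

theorem rate_lt_rate_update_add_vecMulVec {Q : Fin K → Matrix (Fin N) (Fin N) ℂ}
    (hQ : ∀ j, (Q j).PosSemidef) {i : Fin K} {u : Fin N → ℂ} (hu : H i i *ᵥ u ≠ 0) :
    rate H Q i < rate H (Function.update Q i (Q i + vecMulVec u (star u))) i := by
  have hA := posDef_interferencePlusNoise H hQ i
  have hB := hA.add_posSemidef ((hQ i).mul_mul_conjTranspose_same (H i i))
  rw [rate_eq_log_det, rate_eq_log_det, interferencePlusNoise_update_self, Function.update_self,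
    Matrix.mul_add, Matrix.add_mul, mul_vecMulVec_star_mul_conjTranspose,
    hA.det_one_add_inv_mul_re, hA.det_one_add_inv_mul_re, ← add_assoc]
  exact Real.log_lt_log (div_pos hB.det_re_pos hA.det_re_pos)
    (div_lt_div_of_pos_right (hB.det_re_lt_det_add_vecMulVec_star hu) hA.det_re_pos)

end Channel

theorem Feasible.update {K N : ℕ} {P : Fin K → ℝ} {Q : Fin K → Matrix (Fin N) (Fin N) ℂ}
    (hQ : Feasible P Q) {i : Fin K} {X : Matrix (Fin N) (Fin N) ℂ} (hX : X.PosSemidef)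
    (htr : X.trace.re ≤ P i) : Feasible P (Function.update Q i X) := by
  intro j
  rcases eq_or_ne j i with rfl | hj
  · simpa using ⟨hX, htr⟩
  · simpa [Function.update_of_ne hj] using hQ j

theorem stmt1_general {K N : ℕ} {M : Fin K → ℕ}
    (H : ∀ i j : Fin K, Matrix (Fin (M i)) (Fin N) ℂ)
    (P : Fin K → ℝ)
    (Q : Fin K → Matrix (Fin N) (Fin N) ℂ) (i : Fin K)
    (hv : ∃ v : Fin N → ℂ, H i i *ᵥ v ≠ 0 ∧ ∀ j, j ≠ i → H j i *ᵥ v = 0)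
    (hPareto : ParetoOptimal H P Q) :
    (Q i).trace = (P i : ℂ) := by
  obtain ⟨v, hvi, hvj⟩ := hv
  obtain ⟨hQ, hnot⟩ := hPareto
  rw [(hQ i).1.trace_eq_ofReal_re, Complex.ofReal_inj]
  by_contra hne
  have hslack : 0 < P i - (Q i).trace.re := sub_pos.2 (lt_of_le_of_ne (hQ i).2 hne)
  have hv0 : v ≠ 0 := by rintro rfl; simp at hvi
  obtain ⟨c, hc, hcv⟩ := exists_smul_dotProduct_star_eq hv0 hslack
  have hui : H i i *ᵥ (c • v) ≠ 0 := by simpa [mulVec_smul, hc] using hvi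
  have hQ' : Feasible P (Function.update Q i (Q i + vecMulVec (c • v) (star (c • v)))) :=
    hQ.update ((hQ i).1.add (posSemidef_vecMulVec_self_star _))
      (by rw [trace_add, trace_vecMulVec, hcv, Complex.add_re, Complex.ofReal_re, add_sub_cancel])
  have hlt := rate_lt_rate_update_add_vecMulVec H (fun j => (hQ j).1) hui
  refine hnot ⟨_, hQ', fun j => ?_, i, hlt⟩
  rcases eq_or_ne j i with rfl | hj
  · exact hlt.le
  · exact (rate_update_add_vecMulVec_of_ne H Q hj _ (by simp [mulVec_smul, hvj j hj])).ge

/-- **Theorem 1, full-power condition.** If there is a vector `v` with `H i i v ≠ 0` and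
`H j i v = 0` for all `j ≠ i`, and `(Q 1, …, Q K)` is Pareto-optimal, then transmitter `i`
uses full power: `tr (Q i) = P i`. -/
theorem stmt1 {K N : ℕ} {M : Fin K → ℕ}
    (H : ∀ i j : Fin K, Matrix (Fin (M i)) (Fin N) ℂ)
    (P : Fin K → ℝ) (hP : ∀ j, 0 < P j)
    (Q : Fin K → Matrix (Fin N) (Fin N) ℂ) (i : Fin K)
    (hv : ∃ v : Fin N → ℂ, H i i *ᵥ v ≠ 0 ∧ ∀ j, j ≠ i → H j i *ᵥ v = 0)
    (hPareto : ParetoOptimal H P Q) :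
    (Q i).trace = (P i : ℂ) :=
  stmt1_general H P Q i hv hPareto
end

section
/- In the two-user symmetric case (K = 2, M_1 = M_2 = M), suppose: H_11 and H_21 ∈ ℂ^{M×N} both have full row rank M; there exists v ∈ ℂ^N with H_11 v ≠ 0 and H_21 v = 0; and the M×M matrix H_21 H_11^H is invertible. Let P denote the orthogonal projection of ℂ^N onto range(H_21^H). If the feasible pair (Q_1, Q_2) is Pareto-optimal, then range(Q_1) ⊆ range([H_11^H, (I − P) H_11^H]), i.e., the column space of Q_1 is contained in the sum of range(H_11^H) and the image of range(H_11^H) under the projection I − P. (Corollary 1.) -/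
open Matrix
open scoped ComplexOrder

/-!
Let `p` be the orthogonal projection onto `S = range H11ᴴ + range ((I - P) H11ᴴ)`. Since
`H21 H11ᴴ` is invertible, `H21ᴴ = P H11ᴴ (H21 H11ᴴ)⁻¹ (H21 H21ᴴ)` has its range in `S` as well,
so `H11 p = H11` and `H21 p = H21`: replacing `Q1` by `p Q1 p` changes neither rate. If
`range Q1 ⊄ S`, this replacement strictly lowers the trace, and the power it frees can be spent
on `ε v vᴴ`. Receiver 2 does not see this term because `H21 v = 0`, while by the matrix
determinant lemma it strictly increases the rate of user 1, contradicting Pareto optimality.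
-/

/-- Rate of a user in the two-user MIMO interference channel: `Hd` is the direct channel,
`Hc` the cross (interfering) channel, `Qd` the user's own covariance and `Qc` the
interferer's covariance:
`R = log det (I + (I + Hc Qc Hcᴴ)⁻¹ Hd Qd Hdᴴ)`. -/
noncomputable def rate2 {N M : ℕ} (Hd Hc : Matrix (Fin M) (Fin N) ℂ)
    (Qd Qc : Matrix (Fin N) (Fin N) ℂ) : ℝ :=
  Real.log ((1 + (1 + Hc * Qc * Hcᴴ)⁻¹ * (Hd * Qd * Hdᴴ)).det.re)

/-- Feasibility of a pair of covariance matrices. -/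
def Feasible2 {N : ℕ} (P1 P2 : ℝ) (Q1 Q2 : Matrix (Fin N) (Fin N) ℂ) : Prop :=
  Q1.PosSemidef ∧ Q1.trace.re ≤ P1 ∧ Q2.PosSemidef ∧ Q2.trace.re ≤ P2

/-- Pareto optimality for the two-user channel with channels `H11, H12, H21, H22`
(user 1's rate is `rate2 H11 H12 Q1 Q2`, user 2's rate is `rate2 H22 H21 Q2 Q1`). -/
def ParetoOptimal2 {N M : ℕ} (H11 H12 H21 H22 : Matrix (Fin M) (Fin N) ℂ)
    (P1 P2 : ℝ) (Q1 Q2 : Matrix (Fin N) (Fin N) ℂ) : Prop :=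
  Feasible2 P1 P2 Q1 Q2 ∧
    ¬ ∃ Q1' Q2' : Matrix (Fin N) (Fin N) ℂ, Feasible2 P1 P2 Q1' Q2' ∧
      (rate2 H11 H12 Q1 Q2 ≤ rate2 H11 H12 Q1' Q2' ∧
        rate2 H22 H21 Q2 Q1 ≤ rate2 H22 H21 Q2' Q1') ∧
      (rate2 H11 H12 Q1 Q2 < rate2 H11 H12 Q1' Q2' ∨
        rate2 H22 H21 Q2 Q1 < rate2 H22 H21 Q2' Q1')

namespace Matrix

variable {𝕜 : Type*} [RCLike 𝕜] {m n : Type*} [Fintype n]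

theorem range_mulVecLin_fromCols {R : Type*} [CommSemiring R] {n₁ n₂ : Type*}
    [Fintype n₁] [Fintype n₂] (X : Matrix m n₁ R) (Y : Matrix m n₂ R) :
    LinearMap.range (fromCols X Y).mulVecLin =
      LinearMap.range X.mulVecLin ⊔ LinearMap.range Y.mulVecLin := by
  ext x
  simp only [Submodule.mem_sup, LinearMap.mem_range, mulVecLin_apply]
  constructor
  · rintro ⟨z, rfl⟩
    exact ⟨_, ⟨z ∘ Sum.inl, rfl⟩, _, ⟨z ∘ Sum.inr, rfl⟩, (fromCols_mulVec X Y z).symm⟩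
  · rintro ⟨_, ⟨a, rfl⟩, _, ⟨b, rfl⟩, rfl⟩
    exact ⟨Sum.elim a b, fromCols_mulVec_sumElim X Y a b⟩

theorem mulVec_eq_self_of_mem_range {R : Type*} [CommSemiring R] {p : Matrix n n R}
    (hp : IsIdempotentElem p) {x : n → R} (hx : x ∈ LinearMap.range p.mulVecLin) :
    p *ᵥ x = x := by
  obtain ⟨y, rfl⟩ := hx
  rw [mulVecLin_apply, mulVec_mulVec, hp.eq]

theorem isUnit_mul_conjTranspose_self_of_isUnit_mul_conjTranspose [Fintype m] [DecidableEq m]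
    {A B : Matrix m n 𝕜} (h : IsUnit (B * Aᴴ)) : IsUnit (B * Bᴴ) := by
  rw [← mulVec_injective_iff_isUnit]
  change Function.Injective (B * Bᴴ).mulVecLin
  refine (injective_iff_map_eq_zero _).mpr fun x hx => ?_
  have hBx : Bᴴ *ᵥ x = 0 := (self_mul_conjTranspose_mulVec_eq_zero B x).mp hx
  apply mulVec_injective_iff_isUnit.mpr ((isUnit_conjTranspose _).mpr h)
  rw [mulVec_zero, conjTranspose_mul, conjTranspose_conjTranspose, ← mulVec_mulVec, hBx,
    mulVec_zero]

theorem range_conjTranspose_le_sup [Fintype m] [DecidableEq m] [DecidableEq n]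
    {A B : Matrix m n 𝕜} (hBA : IsUnit (B * Aᴴ)) (hBB : IsUnit (B * Bᴴ)) :
    LinearMap.range Bᴴ.mulVecLin ≤ LinearMap.range Aᴴ.mulVecLin ⊔
      LinearMap.range ((1 - Bᴴ * (B * Bᴴ)⁻¹ * B) * Aᴴ).mulVecLin := by
  set G := (B * Aᴴ)⁻¹ * (B * Bᴴ)
  have hB : Bᴴ = (Aᴴ - (1 - Bᴴ * (B * Bᴴ)⁻¹ * B) * Aᴴ) * G := by
    rw [Matrix.sub_mul (1 : Matrix n n 𝕜), Matrix.one_mul, sub_sub_cancel]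
    simp only [G, Matrix.mul_assoc]
    rw [← Matrix.mul_assoc B,
      mul_nonsing_inv_cancel_left _ _ ((isUnit_iff_isUnit_det _).mp hBA),
      nonsing_inv_mul _ ((isUnit_iff_isUnit_det _).mp hBB), Matrix.mul_one]
  rintro _ ⟨x, rfl⟩
  have hx : Bᴴ *ᵥ x =
      Aᴴ *ᵥ (G *ᵥ x) - ((1 - Bᴴ * (B * Bᴴ)⁻¹ * B) * Aᴴ) *ᵥ (G *ᵥ x) := by
    rw [← sub_mulVec, mulVec_mulVec, ← hB]
  rw [mulVecLin_apply, hx]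
  exact Submodule.sub_mem_sup ⟨_, rfl⟩ ⟨_, rfl⟩

theorem exists_isStarProjection_range_mulVecLin_eq [DecidableEq n]
    (S : Submodule 𝕜 (n → 𝕜)) :
    ∃ p : Matrix n n 𝕜, IsStarProjection p ∧ LinearMap.range p.mulVecLin = S := by
  let U : Submodule 𝕜 (EuclideanSpace 𝕜 n) :=
    S.comap (WithLp.linearEquiv 2 𝕜 (n → 𝕜)).toLinearMap
  let e : Matrix n n 𝕜 ≃⋆ₐ[𝕜] _ := toEuclideanCLM
  set p := e.symm U.starProjection
  have hp : e p = U.starProjection := e.apply_symm_apply _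
  have hU : IsStarProjection U.starProjection := isStarProjection_starProjection
  have hmulVec (x : n → 𝕜) : p *ᵥ x = WithLp.ofLp (U.starProjection (WithLp.toLp 2 x)) := by
    rw [← hp, ofLp_toEuclideanCLM]
  refine ⟨p, ⟨?_, ?_⟩, ?_⟩
  · apply e.injective
    show e (p * p) = e p
    rw [map_mul, hp, hU.isIdempotentElem.eq]
  · apply e.injective
    show e (star p) = e p
    rw [map_star, hp, hU.isSelfAdjoint.star_eq]
  ext x
  constructor
  · rintro ⟨y, rfl⟩
    rw [mulVecLin_apply, hmulVec]
    exact U.starProjection_apply_mem (WithLp.toLp 2 y)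
  · intro hx
    refine ⟨x, ?_⟩
    rw [mulVecLin_apply, hmulVec, Submodule.starProjection_eq_self_iff.mpr hx]

theorem _root_.IsStarProjection.mul_eq_self_of_range_conjTranspose_le [Fintype m]
    {p : Matrix n n 𝕜} (hp : IsStarProjection p) {A : Matrix m n 𝕜}
    (hA : LinearMap.range Aᴴ.mulVecLin ≤ LinearMap.range p.mulVecLin) : A * p = A := by
  classical
  have hpA : p * Aᴴ = Aᴴ := ext_of_mulVec_single fun i => by
    rw [← mulVec_mulVec]
    exact mulVec_eq_self_of_mem_range hp.isIdempotentElem (hA ⟨_, rfl⟩)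
  simpa [← star_eq_conjTranspose, hp.isSelfAdjoint.star_eq] using congrArg conjTranspose hpA

open scoped MatrixOrder in
theorem _root_.IsStarProjection.trace_mul_mul_lt {p Q : Matrix n n 𝕜} (hp : IsStarProjection p)
    (hQ : Q.PosSemidef) (h : ¬ LinearMap.range Q.mulVecLin ≤ LinearMap.range p.mulVecLin) :
    (p * Q * p).trace < Q.trace := by
  classical
  obtain ⟨R, hR⟩ := CStarAlgebra.nonneg_iff_eq_star_mul_self.mp hQ.nonneg
  rw [star_eq_conjTranspose] at hR
  subst hR
  have hpH : pᴴ = p := hp.isSelfAdjoint.star_eq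
  have hsplit : (Rᴴ * R).trace =
      (p * (Rᴴ * R) * p).trace + ((R * (1 - p))ᴴ * (R * (1 - p))).trace := by
    have hexpand : (R * (1 - p))ᴴ * (R * (1 - p)) =
        Rᴴ * R - p * (Rᴴ * R) - Rᴴ * R * p + p * (Rᴴ * R) * p := by
      rw [conjTranspose_mul, conjTranspose_sub, conjTranspose_one, hpH]
      noncomm_ring
    have hleft : (p * (Rᴴ * R)).trace = (p * (Rᴴ * R) * p).trace := by
      rw [trace_mul_cycle, hp.isIdempotentElem.eq]
    have hright : (Rᴴ * R * p).trace = (p * (Rᴴ * R) * p).trace := by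
      rw [trace_mul_comm, hleft]
    rw [hexpand, trace_add, trace_sub, trace_sub, hleft, hright]
    ring
  have hpos : 0 < ((R * (1 - p))ᴴ * (R * (1 - p))).trace := by
    refine (posSemidef_conjTranspose_mul_self _).trace_nonneg.lt_of_ne' fun h0 => h ?_
    rw [trace_conjTranspose_mul_self_eq_zero_iff, mul_sub, mul_one, sub_eq_zero] at h0
    have hRp : Rᴴ * R = p * (Rᴴ * R) := by
      conv_lhs => rw [h0, conjTranspose_mul, hpH, Matrix.mul_assoc, ← h0]
    rintro _ ⟨x, rfl⟩
    exact ⟨(Rᴴ * R) *ᵥ x, by rw [mulVecLin_apply, mulVecLin_apply, mulVec_mulVec, ← hRp]⟩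
  exact hsplit ▸ lt_add_of_pos_right _ hpos

theorem mul_add_smul_vecMulVec_mul_conjTranspose_of_mul_eq_self {p : Matrix n n 𝕜}
    (hp : IsSelfAdjoint p) {A : Matrix m n 𝕜} (hA : A * p = A) (Q : Matrix n n 𝕜) (c : 𝕜)
    (v : n → 𝕜) :
    A * (p * Q * p + c • vecMulVec v (star v)) * Aᴴ =
      A * Q * Aᴴ + c • vecMulVec (A *ᵥ v) (star (A *ᵥ v)) := by
  have hpA : p * Aᴴ = Aᴴ := by
    simpa [← star_eq_conjTranspose, hp.star_eq] using congrArg conjTranspose hA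
  rw [Matrix.mul_add, Matrix.add_mul, ← Matrix.mul_assoc, ← Matrix.mul_assoc, hA,
    Matrix.mul_assoc _ p, hpA, Matrix.mul_smul, Matrix.smul_mul, mul_vecMulVec, vecMulVec_mul,
    star_mulVec]

theorem det_one_add_inv_mul {K : Type*} [Field K] [DecidableEq n] {A : Matrix n n K}
    (hA : IsUnit A.det) (D : Matrix n n K) : (1 + A⁻¹ * D).det = A.det⁻¹ * (A + D).det := by
  rw [← nonsing_inv_mul A hA, ← Matrix.mul_add, det_mul, det_nonsing_inv, Ring.inverse_eq_inv']

theorem PosDef.det_lt_det_add_smul_vecMulVec [DecidableEq n] {C : Matrix n n 𝕜} (hC : C.PosDef)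
    {w : n → 𝕜} (hw : w ≠ 0) {ε : ℝ} (hε : 0 < ε) :
    C.det < (C + (ε : 𝕜) • vecMulVec w (star w)).det := by
  have hrankOne : (ε : 𝕜) • vecMulVec w (star w) =
      replicateCol Unit ((ε : 𝕜) • w) * replicateRow Unit (star w) := by
    rw [← vecMulVec_eq, smul_vecMulVec]
  have hdet : (C + (ε : 𝕜) • vecMulVec w (star w)).det =
      C.det * (1 + (ε : 𝕜) * (star w ⬝ᵥ C⁻¹ *ᵥ w)) := by
    rw [hrankOne, det_add_replicateCol_mul_replicateRow hC.det_pos.ne'.isUnit, Matrix.mul_assoc,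
      ← replicateCol_mulVec, replicateRow_mul_replicateCol, det_unique (n := Unit)]
    simp only [add_apply, one_apply_eq, of_apply, mulVec_smul, dotProduct_smul, smul_eq_mul]
  rw [hdet]
  exact lt_mul_of_one_lt_right hC.det_pos (lt_add_of_pos_right 1
    (mul_pos (RCLike.ofReal_pos.mpr hε) (hC.inv.dotProduct_mulVec_pos hw)))

end Matrix

theorem rate2_lt_of_mul_mul_conjTranspose_eq_add {N M : ℕ} {Hd Hc : Matrix (Fin M) (Fin N) ℂ}
    {Qd Qd' Qc : Matrix (Fin N) (Fin N) ℂ} (hQd : Qd.PosSemidef) (hQc : Qc.PosSemidef)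
    {w : Fin M → ℂ} (hw : w ≠ 0) {ε : ℝ} (hε : 0 < ε)
    (h : Hd * Qd' * Hdᴴ = Hd * Qd * Hdᴴ + (ε : ℂ) • vecMulVec w (star w)) :
    rate2 Hd Hc Qd Qc < rate2 Hd Hc Qd' Qc := by
  have hA : (1 + Hc * Qc * Hcᴴ).PosDef :=
    PosDef.one.add_posSemidef (hQc.mul_mul_conjTranspose_same Hc)
  have hAB := hA.add_posSemidef (hQd.mul_mul_conjTranspose_same Hd)
  have hdet_inv : 0 < (1 + Hc * Qc * Hcᴴ).det⁻¹ := inv_pos.mpr hA.det_pos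
  have hlt := mul_lt_mul_of_pos_left (hAB.det_lt_det_add_smul_vecMulVec hw hε) hdet_inv
  rw [rate2, rate2, h, det_one_add_inv_mul hA.det_pos.ne'.isUnit,
    det_one_add_inv_mul hA.det_pos.ne'.isUnit, ← add_assoc]
  exact Real.log_lt_log (Complex.lt_def.mp (mul_pos hdet_inv hAB.det_pos)).1
    (Complex.lt_def.mp hlt).1

theorem IsStarProjection.exists_trace_re_add_smul_vecMulVec_eq {n : Type*} [Fintype n]
    {p Q : Matrix n n ℂ} (hp : IsStarProjection p) (hQ : Q.PosSemidef)
    (h : ¬ LinearMap.range Q.mulVecLin ≤ LinearMap.range p.mulVecLin) {v : n → ℂ}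
    (hv : v ≠ 0) :
    ∃ ε : ℝ, 0 < ε ∧ (p * Q * p + (ε : ℂ) • vecMulVec v (star v)).PosSemidef ∧
      (p * Q * p + (ε : ℂ) • vecMulVec v (star v)).trace.re = Q.trace.re := by
  have hlt := (Complex.lt_def.mp (hp.trace_mul_mul_lt hQ h)).1
  have hτ : 0 < (vecMulVec v (star v)).trace.re := by
    rw [trace_vecMulVec]
    exact (Complex.lt_def.mp (dotProduct_self_star_pos_iff.mpr hv)).1
  have hε := div_pos (sub_pos.mpr hlt) hτ
  refine ⟨_, hε, ?_, ?_⟩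
  · have hpH : pᴴ = p := hp.isSelfAdjoint.star_eq
    have hpQp : (p * Q * p).PosSemidef := by
      simpa only [hpH] using hQ.mul_mul_conjTranspose_same p
    exact hpQp.add ((posSemidef_vecMulVec_self_star v).smul (by exact_mod_cast hε.le))
  · rw [trace_add, trace_smul, smul_eq_mul, Complex.add_re, Complex.re_ofReal_mul]
    field_simp
    ring

theorem stmt10_general {N M : ℕ} (H11 H12 H21 H22 : Matrix (Fin M) (Fin N) ℂ)
    (P1 P2 : ℝ) (v : Fin N → ℂ) (hv1 : H11 *ᵥ v ≠ 0) (hv2 : H21 *ᵥ v = 0)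
    (hinv : IsUnit (H21 * H11ᴴ))
    (Q1 Q2 : Matrix (Fin N) (Fin N) ℂ)
    (hPareto : ParetoOptimal2 H11 H12 H21 H22 P1 P2 Q1 Q2) :
    LinearMap.range Q1.mulVecLin ≤
      LinearMap.range
        (Matrix.fromCols H11ᴴ
          ((1 - H21ᴴ * (H21 * H21ᴴ)⁻¹ * H21) * H11ᴴ)).mulVecLin := by
  obtain ⟨⟨hQ1, hQ1tr, hQ2, hQ2tr⟩, hOpt⟩ := hPareto
  rw [range_mulVecLin_fromCols]
  obtain ⟨p, hp, hrange⟩ := exists_isStarProjection_range_mulVecLin_eq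
    (LinearMap.range H11ᴴ.mulVecLin ⊔
      LinearMap.range ((1 - H21ᴴ * (H21 * H21ᴴ)⁻¹ * H21) * H11ᴴ).mulVecLin)
  have h11 : H11 * p = H11 :=
    hp.mul_eq_self_of_range_conjTranspose_le (le_sup_left.trans hrange.ge)
  have h21 : H21 * p = H21 := hp.mul_eq_self_of_range_conjTranspose_le
    ((range_conjTranspose_le_sup hinv
      (isUnit_mul_conjTranspose_self_of_isUnit_mul_conjTranspose hinv)).trans hrange.ge)
  rw [← hrange]
  by_contra hQ1p
  have hv : v ≠ 0 := by rintro rfl; exact hv1 (mulVec_zero H11)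
  obtain ⟨ε, hε, hQ1', htr⟩ := hp.exists_trace_re_add_smul_vecMulVec_eq hQ1 hQ1p hv
  set Q1' := p * Q1 * p + (ε : ℂ) • vecMulVec v (star v)
  have hrate1 : rate2 H11 H12 Q1 Q2 < rate2 H11 H12 Q1' Q2 :=
    rate2_lt_of_mul_mul_conjTranspose_eq_add hQ1 hQ2 hv1 hε
      (mul_add_smul_vecMulVec_mul_conjTranspose_of_mul_eq_self hp.isSelfAdjoint h11 Q1 _ v)
  have hrate2 : rate2 H22 H21 Q2 Q1' = rate2 H22 H21 Q2 Q1 := by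
    rw [rate2, rate2,
      mul_add_smul_vecMulVec_mul_conjTranspose_of_mul_eq_self hp.isSelfAdjoint h21, hv2,
      zero_vecMulVec, smul_zero, add_zero]
  exact hOpt ⟨Q1', Q2, ⟨hQ1', htr.trans_le hQ1tr, hQ2, hQ2tr⟩, ⟨hrate1.le, hrate2.ge⟩,
    Or.inl hrate1⟩

/-- **Corollary 1.** In the two-user symmetric case (`M₁ = M₂ = M`), if `H11` and `H21`
have full row rank `M`, there is `v` with `H11 v ≠ 0` and `H21 v = 0`, and `H21 H11ᴴ` is
invertible, then for any Pareto-optimal pair `(Q1, Q2)` the column space of `Q1` is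
contained in the column span of `[H11ᴴ, (I − P) H11ᴴ]`, where
`P = H21ᴴ (H21 H21ᴴ)⁻¹ H21` is the orthogonal projection onto `range H21ᴴ`. -/
theorem stmt10 {N M : ℕ} (H11 H12 H21 H22 : Matrix (Fin M) (Fin N) ℂ)
    (P1 P2 : ℝ) (hP1 : 0 < P1) (hP2 : 0 < P2)
    (hrank11 : H11.rank = M) (hrank21 : H21.rank = M)
    (v : Fin N → ℂ) (hv1 : H11 *ᵥ v ≠ 0) (hv2 : H21 *ᵥ v = 0)
    (hinv : IsUnit (H21 * H11ᴴ))
    (Q1 Q2 : Matrix (Fin N) (Fin N) ℂ)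
    (hPareto : ParetoOptimal2 H11 H12 H21 H22 P1 P2 Q1 Q2) :
    LinearMap.range Q1.mulVecLin ≤
      LinearMap.range
        (Matrix.fromCols H11ᴴ
          ((1 - H21ᴴ * (H21 * H21ᴴ)⁻¹ * H21) * H11ᴴ)).mulVecLin :=
  stmt10_general H11 H12 H21 H22 P1 P2 v hv1 hv2 hinv Q1 Q2 hPareto
end
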